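/- For each j = 1,…,d, let p_j, q_j : [0,1] → ℝ be positive and continuously differentiable with p_j'(x)q_j(x) − p_j(x)q_j'(x) > 0 for all x ∈ [0,1]. Then there exist constants 0 < a ≤ b such that a·2^{|l|} ≤ η_{l,i} ≤ b·2^{|l|} for all multi-indices l ∈ ℕ_{≥1}^d and all i ∈ ρ(l); that is, η_{l,i} ≍ 2^{|l|} uniformly in i. -/

import Mathlib

open Matrix

noncomputable section

/-- The dyadic point `c_{l,i} = i · 2^{-l}`. -/
def cpt (l i : ℕ) : ℝ := (i : ℝ) / 2 ^ l

/-- The multidimensional dyadic point `c_{l,i}`. -/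
def cpoint {d : ℕ} (l i : Fin d → ℕ) : Fin d → ℝ := fun j => cpt (l j) (i j)

/-- The set `ρ(l)` of odd multi-indices associated with the level multi-index `l`. -/
def rho {d : ℕ} (l : Fin d → ℕ) : Set (Fin d → ℕ) :=
  {i | ∀ j, Odd (i j) ∧ 1 ≤ i j ∧ i j ≤ 2 ^ (l j) - 1}

/-- The classical sparse grid of level `τ` in dimension `d`. -/
def SGset (d τ : ℕ) : Set (Fin d → ℝ) :=
  {x | ∃ l : Fin d → ℕ, (∀ j, 1 ≤ l j) ∧ (∑ j, l j) ≤ τ + d - 1 ∧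
    ∀ j, ∃ i : ℕ, 1 ≤ i ∧ i ≤ 2 ^ (l j) - 1 ∧ x j = cpt (l j) i}

/-- A tensor Markov kernel on `(0,1)^d` satisfying Assumption SL: factors
`p_j, q_j` are continuous on `[0,1]`, positive on `(0,1)`, satisfy the strict
"determinant" positivity (the precise form of `p_j/q_j` strictly increasing with
`p_j, q_j > 0`), are continuously differentiable on `(0,1)`, and both solve the
Sturm–Liouville equation `(u_j f')' + v_j f = 0` on `(0,1)`. -/
structure TMKernelSL (d : ℕ) where
  p : Fin d → ℝ → ℝ
  q : Fin d → ℝ → ℝ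
  cont_p : ∀ j, ContinuousOn (p j) (Set.Icc 0 1)
  cont_q : ∀ j, ContinuousOn (q j) (Set.Icc 0 1)
  pos_p : ∀ j, ∀ x ∈ Set.Ioo (0:ℝ) 1, 0 < p j x
  pos_q : ∀ j, ∀ x ∈ Set.Ioo (0:ℝ) 1, 0 < q j x
  det_pos : ∀ j, ∀ y ∈ Set.Icc (0:ℝ) 1, ∀ x ∈ Set.Icc (0:ℝ) 1, y < x →
    0 < p j x * q j y - p j y * q j x
  u : Fin d → ℝ → ℝ
  v : Fin d → ℝ → ℝ
  contDiff_p : ∀ j, ContDiffOn ℝ 1 (p j) (Set.Ioo 0 1)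
  contDiff_q : ∀ j, ContDiffOn ℝ 1 (q j) (Set.Ioo 0 1)
  contDiff_u : ∀ j, ContDiffOn ℝ 1 (u j) (Set.Ioo 0 1)
  cont_v : ∀ j, ContinuousOn (v j) (Set.Ioo 0 1)
  sl_p : ∀ j, ∀ x ∈ Set.Ioo (0:ℝ) 1,
    deriv (fun t => u j t * deriv (p j) t) x + v j x * p j x = 0
  sl_q : ∀ j, ∀ x ∈ Set.Ioo (0:ℝ) 1,
    deriv (fun t => u j t * deriv (q j) t) x + v j x * q j x = 0

/-- The tensor Markov kernel `k(x,x') = ∏_j p_j(min) q_j(max)`. -/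
def TMKernelSL.k {d : ℕ} (κ : TMKernelSL d) (x x' : Fin d → ℝ) : ℝ :=
  ∏ j, κ.p j (min (x j) (x' j)) * κ.q j (max (x j) (x' j))

/-- The `j`-th one-dimensional factor kernel of a TM kernel. -/
def TMKernelSL.k1 {d : ℕ} (κ : TMKernelSL d) (j : Fin d) (a b : ℝ) : ℝ :=
  κ.p j (min a b) * κ.q j (max a b)

/-- Kernel matrix of the design `x_1,…,x_n`. -/
def kerMat {d n : ℕ} (κ : TMKernelSL d) (x : Fin n → Fin d → ℝ) :
    Matrix (Fin n) (Fin n) ℝ :=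
  Matrix.of fun a b => κ.k (x a) (x b)

/-- Kernel vector `k(z) = (k(z,x_1),…,k(z,x_n))`. -/
def kerVec {d n : ℕ} (κ : TMKernelSL d) (x : Fin n → Fin d → ℝ) (z : Fin d → ℝ) :
    Fin n → ℝ :=
  fun a => κ.k z (x a)

/-- `x_1,…,x_n` is a truncated sparse grid design: the points are distinct, and for the level
`τ` with `|X_τ^SG| ≤ n < |X_{τ+1}^SG|`, the design contains all of `X_τ^SG` and is contained
in `X_{τ+1}^SG`. -/
def IsTSGDesign {d n : ℕ} (x : Fin n → Fin d → ℝ) : Prop :=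
  Function.Injective x ∧
  ∃ τ : ℕ, 1 ≤ τ ∧ (SGset d τ).ncard ≤ n ∧ n < (SGset d (τ + 1)).ncard ∧
    SGset d τ ⊆ Set.range x ∧ Set.range x ⊆ SGset d (τ + 1)

/-- One-dimensional quantity `η_{l,i}` (the squared RKHS norm of the hat function). -/
def eta1 (p q : ℝ → ℝ) (l i : ℕ) : ℝ :=
  (p (cpt l (i + 1)) * q (cpt l (i - 1)) - p (cpt l (i - 1)) * q (cpt l (i + 1))) /
    ((p (cpt l i) * q (cpt l (i - 1)) - p (cpt l (i - 1)) * q (cpt l i)) *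
      (p (cpt l (i + 1)) * q (cpt l i) - p (cpt l i) * q (cpt l (i + 1))))

/-- Multidimensional `η_{l,i} = ∏_j η^{(j)}_{l_j,i_j}`. -/
def etaP {d : ℕ} (p q : Fin d → ℝ → ℝ) (l i : Fin d → ℕ) : ℝ :=
  ∏ j, eta1 (p j) (q j) (l j) (i j)

/-- One-dimensional hat function `φ_{l,i}` associated with `p, q`. -/
def phi1 (p q : ℝ → ℝ) (l i : ℕ) (x : ℝ) : ℝ :=
  if cpt l (i - 1) < x ∧ x ≤ cpt l i then
    (p x * q (cpt l (i - 1)) - p (cpt l (i - 1)) * q x) /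
      (p (cpt l i) * q (cpt l (i - 1)) - p (cpt l (i - 1)) * q (cpt l i))
  else if cpt l i < x ∧ x < cpt l (i + 1) then
    (p (cpt l (i + 1)) * q x - p x * q (cpt l (i + 1))) /
      (p (cpt l (i + 1)) * q (cpt l i) - p (cpt l i) * q (cpt l (i + 1)))
  else 0

/-- Multidimensional hat function `φ_{l,i}(x) = ∏_j φ^{(j)}_{l_j,i_j}(x_j)`. -/
def phiD {d : ℕ} (p q : Fin d → ℝ → ℝ) (l i : Fin d → ℕ) (x : Fin d → ℝ) : ℝ :=
  ∏ j, phi1 (p j) (q j) (l j) (i j) (x j)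

/-- The open hyperrectangle `R_{l,i} = ∏_j (c_{l_j,i_j−1}, c_{l_j,i_j+1})`. -/
def hyperRect {d : ℕ} (l i : Fin d → ℕ) : Set (Fin d → ℝ) :=
  {z | ∀ j, cpt (l j) (i j - 1) < z j ∧ z j < cpt (l j) (i j + 1)}

/-- Number of nonzero entries of a real matrix. -/
def nnzM {α β : Type*} [Fintype α] [Fintype β] (M : Matrix α β ℝ) : ℕ :=
  Set.ncard {ab : α × β | M ab.1 ab.2 ≠ 0}

end

/-!
With `r = p / q`, the cross difference `p x q y - p y q x` equals `q y q x (r x - r y)`, and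
`r' = (p' q - p q') / q²` is continuous and positive on `[0,1]`, hence pinned between two positive
constants. By the mean value theorem the cross difference is therefore comparable to `x - y`,
uniformly on `[0,1]`. In `η^{(j)}_{l,i}` the numerator is a cross difference over a gap `2h` and
the denominator a product of two over gaps `h`, with `h = 2^{-l}`, so `η^{(j)}_{l,i} ≍ 1/h = 2^l`;
multiplying the `d` one-dimensional bounds gives `η_{l,i} ≍ 2^{|l|}`.
-/

open Set

theorem IsCompact.exists_pos_forall_mem_Icc {α : Type*} [TopologicalSpace α] {s : Set α}
    (hs : IsCompact s) {g : α → ℝ} (hg : ContinuousOn g s) (hpos : ∀ x ∈ s, 0 < g x) :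
    ∃ m M : ℝ, 0 < m ∧ ∀ x ∈ s, g x ∈ Icc m M := by
  obtain ⟨m, hm, hmg⟩ := hs.exists_forall_le' hg hpos
  obtain ⟨M, hM⟩ := hs.exists_bound_of_continuousOn hg
  exact ⟨m, M, hm, fun x hx => ⟨hmg x hx, (le_abs_self _).trans (hM x hx)⟩⟩

theorem ContDiffOn.hasDerivAt_derivWithin_Icc {f : ℝ → ℝ} {a b x : ℝ}
    (hf : ContDiffOn ℝ 1 f (Icc a b)) (hx : x ∈ Ioo a b) :
    HasDerivAt f (derivWithin f (Icc a b) x) x :=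
  (hf.differentiableOn one_ne_zero x (Ioo_subset_Icc_self hx)).hasDerivWithinAt.hasDerivAt
    (Icc_mem_nhds hx.1 hx.2)

def crossDet (p q : ℝ → ℝ) (y x : ℝ) : ℝ := p x * q y - p y * q x

theorem crossDet_eq_mul_sub {p q : ℝ → ℝ} {y x : ℝ} (hy : q y ≠ 0) (hx : q x ≠ 0) :
    crossDet p q y x = q y * q x * (p x / q x - p y / q y) := by
  unfold crossDet
  field_simp

theorem eta1_eq_crossDet (p q : ℝ → ℝ) (l i : ℕ) :
    eta1 p q l i = crossDet p q (cpt l (i - 1)) (cpt l (i + 1)) /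
      (crossDet p q (cpt l (i - 1)) (cpt l i) * crossDet p q (cpt l i) (cpt l (i + 1))) :=
  rfl

theorem div_mul_mem_Icc {a b h u v w : ℝ} (ha : 0 < a) (hh : 0 < h)
    (hu : u ∈ Icc (a * h) (b * h)) (hv : v ∈ Icc (a * h) (b * h))
    (hw : w ∈ Icc (a * (2 * h)) (b * (2 * h))) :
    w / (u * v) ∈ Icc (2 * a / b ^ 2 / h) (2 * b / a ^ 2 / h) := by
  obtain ⟨hu₁, hu₂⟩ := hu
  obtain ⟨hv₁, hv₂⟩ := hv
  obtain ⟨hw₁, hw₂⟩ := hw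
  have hah : 0 < a * h := mul_pos ha hh
  have hb : 0 < b := pos_of_mul_pos_left (hah.trans_le (hu₁.trans hu₂)) hh.le
  have huv : 0 < u * v := mul_pos (hah.trans_le hu₁) (hah.trans_le hv₁)
  constructor
  · rw [le_div_iff₀ huv, div_div, div_mul_eq_mul_div, div_le_iff₀ (by positivity)]
    nlinarith [mul_le_mul hu₂ hv₂ (hah.le.trans hv₁) (by positivity : (0:ℝ) ≤ b * h)]
  · rw [div_le_iff₀ huv, div_div, div_mul_eq_mul_div, le_div_iff₀ (by positivity)]
    nlinarith [mul_le_mul hu₁ hv₁ hah.le (hah.le.trans hu₁)]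

theorem sub_mem_Icc_of_deriv_mem_Icc {f : ℝ → ℝ} {D : Set ℝ} (hD : Convex ℝ D)
    (hf : ContinuousOn f D) (hf' : DifferentiableOn ℝ f (interior D)) {m M : ℝ}
    (hbd : ∀ x ∈ interior D, deriv f x ∈ Icc m M) {y x : ℝ} (hy : y ∈ D) (hx : x ∈ D)
    (hyx : y ≤ x) : f x - f y ∈ Icc (m * (x - y)) (M * (x - y)) :=
  ⟨hD.mul_sub_le_image_sub_of_le_deriv hf hf' (fun z hz => (hbd z hz).1) y hy x hx hyx,
    hD.image_sub_le_mul_sub_of_deriv_le hf hf' (fun z hz => (hbd z hz).2) y hy x hx hyx⟩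

theorem Finset.prod_mem_Icc_of_forall_mem_Icc {ι R : Type*} [CommMonoidWithZero R] [Preorder R]
    [ZeroLEOneClass R] [PosMulMono R] (s : Finset ι) {f lo hi : ι → R}
    (h0 : ∀ i ∈ s, 0 ≤ lo i) (h : ∀ i ∈ s, f i ∈ Set.Icc (lo i) (hi i)) :
    ∏ i ∈ s, f i ∈ Set.Icc (∏ i ∈ s, lo i) (∏ i ∈ s, hi i) :=
  ⟨Finset.prod_le_prod h0 fun i hi => (h i hi).1,
    Finset.prod_le_prod (fun i hi => (h0 i hi).trans (h i hi).1) fun i hi => (h i hi).2⟩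

theorem exists_div_sub_div_mem_Icc {p q : ℝ → ℝ} (hp : ContDiffOn ℝ 1 p (Icc 0 1))
    (hq : ContDiffOn ℝ 1 q (Icc 0 1)) (hqpos : ∀ x ∈ Icc (0:ℝ) 1, 0 < q x)
    (hW : ∀ x ∈ Icc (0:ℝ) 1,
      0 < derivWithin p (Icc 0 1) x * q x - p x * derivWithin q (Icc 0 1) x) :
    ∃ m M : ℝ, 0 < m ∧ ∀ y ∈ Icc (0:ℝ) 1, ∀ x ∈ Icc (0:ℝ) 1, y ≤ x →
      p x / q x - p y / q y ∈ Icc (m * (x - y)) (M * (x - y)) := by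
  set I := Icc (0:ℝ) 1
  have hq0 : ∀ x ∈ I, q x ≠ 0 := fun x hx => (hqpos x hx).ne'
  have hderiv_ratio : ∀ x ∈ Ioo (0:ℝ) 1, HasDerivAt (fun t => p t / q t)
      ((derivWithin p I x * q x - p x * derivWithin q I x) / q x ^ 2) x := fun x hx =>
    (hp.hasDerivAt_derivWithin_Icc hx).div (hq.hasDerivAt_derivWithin_Icc hx)
      (hq0 x (Ioo_subset_Icc_self hx))
  have hud : UniqueDiffOn ℝ I := uniqueDiffOn_Icc one_pos
  have hderiv_ratio_cont : ContinuousOn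
      (fun x => (derivWithin p I x * q x - p x * derivWithin q I x) / q x ^ 2) I :=
    (((hp.continuousOn_derivWithin hud le_rfl).mul hq.continuousOn).sub
      (hp.continuousOn.mul (hq.continuousOn_derivWithin hud le_rfl))).div
      (hq.continuousOn.pow 2) fun x hx => pow_ne_zero 2 (hq0 x hx)
  obtain ⟨m, M, hm, hmM⟩ := (isCompact_Icc : IsCompact I).exists_pos_forall_mem_Icc
    hderiv_ratio_cont fun x hx => div_pos (hW x hx) (pow_pos (hqpos x hx) 2)
  refine ⟨m, M, hm, fun y hy x hx hyx => ?_⟩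
  refine sub_mem_Icc_of_deriv_mem_Icc (f := fun t => p t / q t) (convex_Icc 0 1)
    (hp.continuousOn.div hq.continuousOn hq0) (fun z hz => ?_) (fun z hz => ?_) hy hx hyx
  all_goals rw [interior_Icc] at hz
  · exact (hderiv_ratio z hz).differentiableAt.differentiableWithinAt
  · rw [(hderiv_ratio z hz).deriv]
    exact hmM z (Ioo_subset_Icc_self hz)

theorem exists_crossDet_mem_Icc {p q : ℝ → ℝ} (hp : ContDiffOn ℝ 1 p (Icc 0 1))
    (hq : ContDiffOn ℝ 1 q (Icc 0 1)) (hqpos : ∀ x ∈ Icc (0:ℝ) 1, 0 < q x)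
    (hW : ∀ x ∈ Icc (0:ℝ) 1,
      0 < derivWithin p (Icc 0 1) x * q x - p x * derivWithin q (Icc 0 1) x) :
    ∃ a b : ℝ, 0 < a ∧ a ≤ b ∧ ∀ y ∈ Icc (0:ℝ) 1, ∀ x ∈ Icc (0:ℝ) 1, y ≤ x →
      crossDet p q y x ∈ Icc (a * (x - y)) (b * (x - y)) := by
  obtain ⟨m, M, hm, hratio⟩ := exists_div_sub_div_mem_Icc hp hq hqpos hW
  obtain ⟨c, C, hc, hcC⟩ := isCompact_Icc.exists_pos_forall_mem_Icc hq.continuousOn hqpos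
  have hbound : ∀ y ∈ Icc (0:ℝ) 1, ∀ x ∈ Icc (0:ℝ) 1, y ≤ x →
      crossDet p q y x ∈ Icc (c ^ 2 * m * (x - y)) (C ^ 2 * M * (x - y)) := by
    intro y hy x hx hyx
    obtain ⟨hr₁, hr₂⟩ := hratio y hy x hx hyx
    obtain ⟨hqy₁, hqy₂⟩ := hcC y hy
    obtain ⟨hqx₁, hqx₂⟩ := hcC x hx
    have hm_mul : 0 ≤ m * (x - y) := mul_nonneg hm.le (sub_nonneg.2 hyx)
    rw [crossDet_eq_mul_sub (hqpos y hy).ne' (hqpos x hx).ne']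
    constructor
    · calc c ^ 2 * m * (x - y) = c * c * (m * (x - y)) := by ring
        _ ≤ q y * q x * (p x / q x - p y / q y) :=
          mul_le_mul (mul_le_mul hqy₁ hqx₁ hc.le (hqpos y hy).le) hr₁ hm_mul
            (mul_pos (hqpos y hy) (hqpos x hx)).le
    · calc q y * q x * (p x / q x - p y / q y) ≤ C * C * (M * (x - y)) :=
            mul_le_mul (mul_le_mul hqy₂ hqx₂ (hqpos x hx).le (hc.le.trans (hqy₁.trans hqy₂)))
              hr₂ (hm_mul.trans hr₁) (mul_self_nonneg C)
        _ = C ^ 2 * M * (x - y) := by ring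
  have h01 := hbound 0 (left_mem_Icc.2 zero_le_one) 1 (right_mem_Icc.2 zero_le_one) zero_le_one
  exact ⟨c ^ 2 * m, C ^ 2 * M, by positivity, by simpa using h01.1.trans h01.2, hbound⟩

theorem cpt_mem_Icc {l i : ℕ} (hi : i ≤ 2 ^ l) : cpt l i ∈ Icc (0:ℝ) 1 :=
  ⟨by unfold cpt; positivity,
    div_le_one_of_le₀ (by exact_mod_cast hi) (by positivity)⟩

theorem eta1_mem_Icc_of_crossDet_mem_Icc {p q : ℝ → ℝ} {a b : ℝ} (ha : 0 < a)
    (hF : ∀ y ∈ Icc (0:ℝ) 1, ∀ x ∈ Icc (0:ℝ) 1, y ≤ x →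
      crossDet p q y x ∈ Icc (a * (x - y)) (b * (x - y)))
    {l i : ℕ} (hi : 1 ≤ i) (hil : i + 1 ≤ 2 ^ l) :
    eta1 p q l i ∈ Icc (2 * a / b ^ 2 * 2 ^ l) (2 * b / a ^ 2 * 2 ^ l) := by
  obtain ⟨k, rfl⟩ : ∃ k, i = k + 1 := ⟨i - 1, by omega⟩
  set h := ((2:ℝ) ^ l)⁻¹
  have hh : 0 < h := by positivity
  have hF' : ∀ j, j ≤ 2 ^ l → ∀ n : ℕ, j + n ≤ 2 ^ l →
      crossDet p q (cpt l j) (cpt l (j + n)) ∈ Icc (a * (n * h)) (b * (n * h)) := by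
    intro j hj n hjn
    have hgap : cpt l (j + n) - cpt l j = n * h := by
      unfold cpt h
      push_cast
      ring
    rw [← hgap]
    exact hF _ (cpt_mem_Icc hj) _ (cpt_mem_Icc hjn) (sub_nonneg.1 (hgap ▸ by positivity))
  rw [eta1_eq_crossDet, Nat.add_sub_cancel, ← div_inv_eq_mul _ (2 ^ l), ← div_inv_eq_mul _ (2 ^ l)]
  have h₁ := hF' k (by omega) 1 (by omega)
  have h₂ := hF' (k + 1) (by omega) 1 (by omega)
  have h₃ := hF' k (by omega) 2 (by omega)
  push_cast [one_mul, add_assoc] at h₁ h₂ h₃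
  exact div_mul_mem_Icc ha hh h₁ h₂ h₃

theorem exists_eta1_mem_Icc {p q : ℝ → ℝ} (hp : ContDiffOn ℝ 1 p (Icc 0 1))
    (hq : ContDiffOn ℝ 1 q (Icc 0 1)) (hqpos : ∀ x ∈ Icc (0:ℝ) 1, 0 < q x)
    (hW : ∀ x ∈ Icc (0:ℝ) 1,
      0 < derivWithin p (Icc 0 1) x * q x - p x * derivWithin q (Icc 0 1) x) :
    ∃ A B : ℝ, 0 < A ∧ A ≤ B ∧ ∀ l i : ℕ, 1 ≤ i → i + 1 ≤ 2 ^ l →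
      eta1 p q l i ∈ Icc (A * 2 ^ l) (B * 2 ^ l) := by
  obtain ⟨a, b, ha, hab, hF⟩ := exists_crossDet_mem_Icc hp hq hqpos hW
  have hb : 0 < b := ha.trans_le hab
  exact ⟨2 * a / b ^ 2, 2 * b / a ^ 2, by positivity,
    div_le_div₀ (by positivity) (by linarith) (by positivity) (pow_le_pow_left₀ ha.le hab 2),
    fun l i hi hil => eta1_mem_Icc_of_crossDet_mem_Icc ha hF hi hil⟩

theorem eta_asymptotics_general (d : ℕ) (p q : Fin d → ℝ → ℝ)
    (hp : ∀ j, ContDiffOn ℝ 1 (p j) (Set.Icc 0 1))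
    (hq : ∀ j, ContDiffOn ℝ 1 (q j) (Set.Icc 0 1))
    (hqpos : ∀ j, ∀ x ∈ Set.Icc (0:ℝ) 1, 0 < q j x)
    (hW : ∀ j, ∀ x ∈ Set.Icc (0:ℝ) 1,
      0 < derivWithin (p j) (Set.Icc 0 1) x * q j x
            - p j x * derivWithin (q j) (Set.Icc 0 1) x) :
    ∃ a b : ℝ, 0 < a ∧ a ≤ b ∧
      ∀ l i : Fin d → ℕ, (∀ j, 1 ≤ l j) → i ∈ rho l →
        a * 2 ^ (∑ j, l j) ≤ etaP p q l i ∧ etaP p q l i ≤ b * 2 ^ (∑ j, l j) := by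
  choose A B hA hAB heta using fun j => exists_eta1_mem_Icc (hp j) (hq j) (hqpos j) (hW j)
  refine ⟨∏ j, A j, ∏ j, B j, Finset.prod_pos fun j _ => hA j,
    Finset.prod_le_prod (fun j _ => (hA j).le) fun j _ => hAB j, fun l i _ hi => ?_⟩
  have hmem := Finset.prod_mem_Icc_of_forall_mem_Icc Finset.univ
    (fun j _ => (mul_pos (hA j) (pow_pos two_pos (l j))).le) fun j _ =>
      heta j (l j) (i j) (hi j).2.1
        (by have := (hi j).2.2; have := @Nat.one_le_two_pow (l j); omega)
  simp only [Finset.prod_mul_distrib, Finset.prod_pow_eq_pow_sum] at hmem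
  exact hmem

/-- **Lemma EC.2, Ding & Zhang.** For positive continuously differentiable `p_j, q_j` on
`[0,1]` with `p_j' q_j − p_j q_j' > 0` on `[0,1]`, one has `η_{l,i} ≍ 2^{|l|}` uniformly in
`i ∈ ρ(l)`: there exist `0 < a ≤ b` with `a 2^{|l|} ≤ η_{l,i} ≤ b 2^{|l|}` for all valid
`(l,i)`. -/
theorem eta_asymptotics (d : ℕ) (hd : 1 ≤ d) (p q : Fin d → ℝ → ℝ)
    (hp : ∀ j, ContDiffOn ℝ 1 (p j) (Set.Icc 0 1))
    (hq : ∀ j, ContDiffOn ℝ 1 (q j) (Set.Icc 0 1))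
    (hppos : ∀ j, ∀ x ∈ Set.Icc (0:ℝ) 1, 0 < p j x)
    (hqpos : ∀ j, ∀ x ∈ Set.Icc (0:ℝ) 1, 0 < q j x)
    (hW : ∀ j, ∀ x ∈ Set.Icc (0:ℝ) 1,
      0 < derivWithin (p j) (Set.Icc 0 1) x * q j x
            - p j x * derivWithin (q j) (Set.Icc 0 1) x) :
    ∃ a b : ℝ, 0 < a ∧ a ≤ b ∧
      ∀ l i : Fin d → ℕ, (∀ j, 1 ≤ l j) → i ∈ rho l →
        a * 2 ^ (∑ j, l j) ≤ etaP p q l i ∧ etaP p q l i ≤ b * 2 ^ (∑ j, l j) :=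
  eta_asymptotics_general d p q hp hq hqpos hW
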